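/- Let E, F and G be locally convex spaces. A bilinear mapping E × F → G is bounded if and only if the associated linear mapping E ⊗_β F → G is bounded; more precisely, the transpose of the canonical bilinear map ⊗ : E × F → E ⊗_β F and the exponential law give bornological isomorphisms L^b(E ⊗_β F, G) ≅ L^b(E, F; G) ≅ L^b(E, L^b(F, G)). -/

import Mathlib

/-!
Everything except one implication is formal: `⊗` is bounded, the bounded subsets of `E × F` are
the subsets of products of bounded sets, and uncurrying converts equiboundedness on products
`B × B'` into equiboundedness on `B` of the curried maps.

The substance is that a family `S` of linear maps on `E ⊗ F` which is equibounded on the images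
under `⊗` of bounded sets is equibounded on `E ⊗_β F`. The topology on `E ⊗ F` of uniform
convergence on `S` is locally convex, and it is a vector topology because `S` is pointwise
bounded (by induction on tensors). Since `⊗` is bounded for it, it is coarser than the
β-topology, so β-bounded sets are bounded uniformly over `S`.
-/

open MulOpposite Set
open scoped TensorProduct Pointwise

/-- Convexity expressed through the real scalars of `𝕜` (`𝕜` = ℝ or ℂ). -/
def RCConvex (𝕜 : Type*) [RCLike 𝕜] {E : Type*} [AddCommGroup E] [Module 𝕜 E]
    (s : Set E) : Prop :=
  ∀ ⦃x⦄, x ∈ s → ∀ ⦃y⦄, y ∈ s → ∀ t : ℝ, 0 ≤ t → t ≤ 1 →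
    ((t : 𝕜) • x + (((1 - t : ℝ) : 𝕜)) • y) ∈ s

/-- `τ` is a linear topology: addition and scalar multiplication continuous. -/
def IsLinearTop (𝕜 : Type*) [RCLike 𝕜] (E : Type*) [AddCommGroup E] [Module 𝕜 E]
    (τ : TopologicalSpace E) : Prop :=
  @IsTopologicalAddGroup E τ _ ∧ @ContinuousSMul 𝕜 E _ _ τ

/-- `τ` is a locally convex topology. -/
def IsLCTop (𝕜 : Type*) [RCLike 𝕜] (E : Type*) [AddCommGroup E] [Module 𝕜 E]
    (τ : TopologicalSpace E) : Prop :=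
  IsLinearTop 𝕜 E τ ∧ ∀ U ∈ @nhds E τ 0, ∃ V ∈ @nhds E τ 0, V ⊆ U ∧ RCConvex 𝕜 V

/-- von Neumann boundedness for an explicitly given topology. -/
def VNBdd (𝕜 : Type*) [RCLike 𝕜] {E : Type*} [AddCommGroup E] [Module 𝕜 E]
    (τ : TopologicalSpace E) (s : Set E) : Prop :=
  ∀ V ∈ @nhds E τ 0, Absorbs 𝕜 V s

/-- `f` maps von Neumann bounded sets to von Neumann bounded sets. -/
def BddMap (𝕜 : Type*) [RCLike 𝕜] {E F : Type*} [AddCommGroup E] [Module 𝕜 E]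
    [AddCommGroup F] [Module 𝕜 F]
    (τE : TopologicalSpace E) (τF : TopologicalSpace F) (f : E → F) : Prop :=
  ∀ s : Set E, VNBdd 𝕜 τE s → VNBdd 𝕜 τF (f '' s)

/-- A family `S` of maps is (equi-)bounded: this is exactly von Neumann boundedness
of `S` in the topology of uniform convergence on bounded sets. -/
def FamBdd (𝕜 : Type*) [RCLike 𝕜] {E F : Type*} [AddCommGroup E] [Module 𝕜 E]
    [AddCommGroup F] [Module 𝕜 F]
    (τE : TopologicalSpace E) (τF : TopologicalSpace F) (S : Set (E → F)) : Prop :=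
  ∀ s : Set E, VNBdd 𝕜 τE s → VNBdd 𝕜 τF (⋃ f ∈ S, f '' s)

/-- `𝕜`-bilinearity of a map on a product. -/
def IsBilinMap (𝕜 : Type*) [RCLike 𝕜] {M N E : Type*} [AddCommGroup M] [Module 𝕜 M]
    [AddCommGroup N] [Module 𝕜 N] [AddCommGroup E] [Module 𝕜 E]
    (f : M × N → E) : Prop :=
  (∀ m m' n, f (m + m', n) = f (m, n) + f (m', n)) ∧
  (∀ (c : 𝕜) m n, f (c • m, n) = c • f (m, n)) ∧
  (∀ m n n', f (m, n + n') = f (m, n) + f (m, n')) ∧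
  (∀ (c : 𝕜) m n, f (m, c • n) = c • f (m, n))

/-- `f` is `A`-balanced: `f (m·a, n) = f (m, a·n)`; the right `A`-module structure
on `M` is given by a `Aᵐᵒᵖ`-module structure. -/
def IsBalancedMap (A : Type*) [Ring A] {M N E : Type*} [AddCommGroup M]
    [Module Aᵐᵒᵖ M] [AddCommGroup N] [Module A N] (f : M × N → E) : Prop :=
  ∀ (a : A) (m : M) (n : N), f (op a • m, n) = f (m, a • n)

/-- `τ` is the projective tensor product topology on `M ⊗[𝕜] N`: the finest locally
convex topology making the canonical bilinear map continuous. -/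
def IsProjTensorTop (𝕜 : Type*) [RCLike 𝕜] {M N : Type*} [AddCommGroup M] [Module 𝕜 M]
    [AddCommGroup N] [Module 𝕜 N] (τM : TopologicalSpace M) (τN : TopologicalSpace N)
    (τ : TopologicalSpace (TensorProduct 𝕜 M N)) : Prop :=
  IsLCTop 𝕜 (TensorProduct 𝕜 M N) τ ∧
  @Continuous (M × N) (TensorProduct 𝕜 M N) (@instTopologicalSpaceProd M N τM τN) τ
    (fun p => p.1 ⊗ₜ[𝕜] p.2) ∧
  ∀ τ' : TopologicalSpace (TensorProduct 𝕜 M N), IsLCTop 𝕜 (TensorProduct 𝕜 M N) τ' →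
    @Continuous (M × N) (TensorProduct 𝕜 M N) (@instTopologicalSpaceProd M N τM τN) τ'
      (fun p => p.1 ⊗ₜ[𝕜] p.2) → τ ≤ τ'

/-- `τ` is the bornological tensor product topology on `M ⊗[𝕜] N`: the finest locally
convex topology making the canonical bilinear map bounded. -/
def IsBetaTensorTop (𝕜 : Type*) [RCLike 𝕜] {M N : Type*} [AddCommGroup M] [Module 𝕜 M]
    [AddCommGroup N] [Module 𝕜 N] (τM : TopologicalSpace M) (τN : TopologicalSpace N)
    (τ : TopologicalSpace (TensorProduct 𝕜 M N)) : Prop :=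
  IsLCTop 𝕜 (TensorProduct 𝕜 M N) τ ∧
  BddMap 𝕜 (@instTopologicalSpaceProd M N τM τN) τ (fun p : M × N => p.1 ⊗ₜ[𝕜] p.2) ∧
  ∀ τ' : TopologicalSpace (TensorProduct 𝕜 M N), IsLCTop 𝕜 (TensorProduct 𝕜 M N) τ' →
    BddMap 𝕜 (@instTopologicalSpaceProd M N τM τN) τ' (fun p : M × N => p.1 ⊗ₜ[𝕜] p.2) →
      τ ≤ τ'

/-- The subspace `J₀` of `M ⊗[𝕜] N` spanned by the elements `m·a ⊗ n - m ⊗ a·n`. -/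
def balancedRel (𝕜 A : Type*) [RCLike 𝕜] [Ring A] [Algebra 𝕜 A] (M N : Type*)
    [AddCommGroup M] [Module 𝕜 M] [Module Aᵐᵒᵖ M]
    [AddCommGroup N] [Module 𝕜 N] [Module A N] :
    Submodule 𝕜 (TensorProduct 𝕜 M N) :=
  Submodule.span 𝕜
    {x | ∃ (a : A) (m : M) (n : N), x = (op a • m) ⊗ₜ[𝕜] n - m ⊗ₜ[𝕜] (a • n)}

/-- The subspace `J₀` for modules over a commutative algebra `A`. -/
def balancedRelComm (𝕜 A : Type*) [RCLike 𝕜] [CommRing A] [Algebra 𝕜 A] (M N : Type*)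
    [AddCommGroup M] [Module 𝕜 M] [Module A M]
    [AddCommGroup N] [Module 𝕜 N] [Module A N] :
    Submodule 𝕜 (TensorProduct 𝕜 M N) :=
  Submodule.span 𝕜
    {x | ∃ (a : A) (m : M) (n : N), x = (a • m) ⊗ₜ[𝕜] n - m ⊗ₜ[𝕜] (a • n)}

/-- Boundedness of a family of curried maps. -/
def CurFamBdd (𝕜 : Type*) [RCLike 𝕜] {M N P : Type*} [AddCommGroup M] [Module 𝕜 M]
    [AddCommGroup N] [Module 𝕜 N] [AddCommGroup P] [Module 𝕜 P]
    (τM : TopologicalSpace M) (τN : TopologicalSpace N) (τP : TopologicalSpace P)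
    (S : Set (M → N → P)) : Prop :=
  ∀ B : Set M, VNBdd 𝕜 τM B → FamBdd 𝕜 τN τP (⋃ h ∈ S, h '' B)

/-- `h` is a bounded linear map `E → L^b(F, G)`. -/
def IsCurriedBddHomK (𝕜 : Type*) [RCLike 𝕜] {E F G : Type*} [AddCommGroup E] [Module 𝕜 E]
    [AddCommGroup F] [Module 𝕜 F] [AddCommGroup G] [Module 𝕜 G]
    (τE : TopologicalSpace E) (τF : TopologicalSpace F) (τG : TopologicalSpace G)
    (h : E → F → G) : Prop :=
  (∀ x x', h (x + x') = h x + h x') ∧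
  (∀ (c : 𝕜) x, h (c • x) = c • h x) ∧
  (∀ x y y', h x (y + y') = h x y + h x y') ∧
  (∀ x (c : 𝕜) y, h x (c • y) = c • h x y) ∧
  (∀ x, BddMap 𝕜 τF τG (h x)) ∧
  (∀ B : Set E, VNBdd 𝕜 τE B → FamBdd 𝕜 τF τG (h '' B))

open Filter Topology Bornology Function TensorProduct

lemma Absorbs.prod {M E F : Type*} [Bornology M] [SMul M E] [SMul M F] {s₁ t₁ : Set E}
    {s₂ t₂ : Set F} (h₁ : Absorbs M s₁ t₁) (h₂ : Absorbs M s₂ t₂) :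
    Absorbs M (s₁ ×ˢ s₂) (t₁ ×ˢ t₂) :=
  (h₁.eventually.and h₂.eventually).mono fun c h => (prod_mono h.1 h.2).trans_eq
    (smul_set_prod c s₁ s₂).symm

lemma biUnion_image_curry_image {E F G : Type*} (S : Set (E × F → G)) (B : Set E) (B' : Set F) :
    ⋃ φ ∈ ⋃ h ∈ Function.curry '' S, h '' B, φ '' B' = ⋃ f ∈ S, f '' (B ×ˢ B') := by
  simp only [biUnion_image, biUnion_iUnion]
  refine iUnion₂_congr fun f _ => ?_
  rw [iUnion_image_left, ← image_uncurry_prod, uncurry_curry]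

section BilinearMaps

variable {𝕜 : Type*} [RCLike 𝕜] {E F G : Type*} [AddCommGroup E] [Module 𝕜 E] [AddCommGroup F]
  [Module 𝕜 F] [AddCommGroup G] [Module 𝕜 G]

lemma isBilinMap_comp_tmul (g : E ⊗[𝕜] F →ₗ[𝕜] G) :
    IsBilinMap 𝕜 fun p : E × F => g (p.1 ⊗ₜ p.2) := by
  refine ⟨fun m m' n => ?_, fun c m n => ?_, fun m n n' => ?_, fun c m n => ?_⟩ <;>
    simp only [add_tmul, tmul_add, ← smul_tmul', tmul_smul, map_add, map_smul]

def IsBilinMap.toLinearMap₂ {f : E × F → G} (hf : IsBilinMap 𝕜 f) : E →ₗ[𝕜] F →ₗ[𝕜] G :=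
  LinearMap.mk₂ 𝕜 (Function.curry f) hf.1 hf.2.1 hf.2.2.1 hf.2.2.2

lemma IsBilinMap.lift_toLinearMap₂_tmul {f : E × F → G} (hf : IsBilinMap 𝕜 f) (x : E) (y : F) :
    lift hf.toLinearMap₂ (x ⊗ₜ y) = f (x, y) :=
  lift.tmul x y

end BilinearMaps

section FamilyBoundedness

variable {𝕜 : Type*} [RCLike 𝕜] {E F G : Type*} [AddCommGroup E] [Module 𝕜 E] [AddCommGroup F]
  [Module 𝕜 F] [AddCommGroup G] [Module 𝕜 G]

lemma famBdd_singleton_iff {τE : TopologicalSpace E} {τF : TopologicalSpace F} {f : E → F} :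
    FamBdd 𝕜 τE τF {f} ↔ BddMap 𝕜 τE τF f := by
  simp only [FamBdd, BddMap, mem_singleton_iff, iUnion_iUnion_eq_left]

lemma FamBdd.comp_bddMap {τE : TopologicalSpace E} {τF : TopologicalSpace F}
    {τG : TopologicalSpace G} {S : Set (F → G)} (hS : FamBdd 𝕜 τF τG S) {u : E → F}
    (hu : BddMap 𝕜 τE τF u) : FamBdd 𝕜 τE τG ((· ∘ u) '' S) := fun s hs => by
  simpa only [biUnion_image, image_comp] using hS _ (hu s hs)

end FamilyBoundedness

section ExponentialLaw

variable {𝕜 : Type*} [RCLike 𝕜]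
variable {E F G : Type*} [AddCommGroup E] [Module 𝕜 E] [TopologicalSpace E]
  [AddCommGroup F] [Module 𝕜 F] [TopologicalSpace F] [AddCommGroup G] [Module 𝕜 G]
  [TopologicalSpace G]

lemma Bornology.IsVonNBounded.prod {s : Set E} {t : Set F} (hs : IsVonNBounded 𝕜 s)
    (ht : IsVonNBounded 𝕜 t) : IsVonNBounded 𝕜 (s ×ˢ t) := fun _ hV => by
  obtain ⟨U₁, hU₁, U₂, hU₂, hU⟩ := mem_nhds_prod_iff.mp hV
  exact ((hs hU₁).prod (ht hU₂)).mono_left hU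

lemma famBdd_iff_curFamBdd (S : Set (E × F → G)) :
    FamBdd 𝕜 inferInstance ‹_› S ↔ CurFamBdd 𝕜 ‹_› ‹_› ‹_› (Function.curry '' S) := by
  simp only [CurFamBdd, FamBdd, biUnion_image_curry_image]
  refine ⟨fun hS B hB B' hB' => hS _ (IsVonNBounded.prod hB hB'), fun hS s hs => ?_⟩
  refine IsVonNBounded.subset ?_ (hS _ (IsVonNBounded.image hs (ContinuousLinearMap.fst 𝕜 E F))
    _ (IsVonNBounded.image hs (ContinuousLinearMap.snd 𝕜 E F)))
  exact biUnion_mono subset_rfl fun f _ => image_mono subset_prod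

lemma bddMap_iff_forall_famBdd_image_curry (f : E × F → G) :
    BddMap 𝕜 inferInstance ‹_› f ↔
      ∀ B : Set E, VNBdd 𝕜 ‹_› B → FamBdd 𝕜 ‹_› ‹_› (curry f '' B) := by
  rw [← famBdd_singleton_iff, famBdd_iff_curFamBdd, image_singleton, CurFamBdd]
  simp only [mem_singleton_iff, iUnion_iUnion_eq_left]

lemma isCurriedBddHomK_curry_iff [ContinuousSMul 𝕜 E] {f : E × F → G} :
    IsCurriedBddHomK 𝕜 ‹_› ‹_› ‹_› (curry f) ↔ BddMap 𝕜 inferInstance ‹_› f ∧ IsBilinMap 𝕜 f := by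
  have bddMap_slice (hf : ∀ B : Set E, VNBdd 𝕜 ‹_› B → FamBdd 𝕜 ‹_› ‹_› (curry f '' B))
      (x : E) : BddMap 𝕜 ‹_› ‹_› (curry f x) := by
    simpa only [image_singleton, famBdd_singleton_iff] using hf {x} (isVonNBounded_singleton x)
  rw [bddMap_iff_forall_famBdd_image_curry]
  simp only [IsCurriedBddHomK, IsBilinMap, funext_iff, curry_apply, Pi.add_apply,
    Pi.smul_apply]
  constructor
  · rintro ⟨add_left, smul_left, add_right, smul_right, -, hf⟩
    exact ⟨hf, add_left, smul_left, add_right, fun c x y => smul_right x c y⟩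
  · rintro ⟨hf, add_left, smul_left, add_right, smul_right⟩
    exact ⟨add_left, smul_left, add_right, fun x c y => smul_right c x y, bddMap_slice hf, hf⟩

lemma bijOn_curry [ContinuousSMul 𝕜 E] :
    BijOn (Function.curry : (E × F → G) → _)
      {f | BddMap 𝕜 inferInstance ‹_› f ∧ IsBilinMap 𝕜 f}
      {h | IsCurriedBddHomK 𝕜 ‹_› ‹_› ‹_› h} :=
  ⟨fun _ hf => isCurriedBddHomK_curry_iff.mpr hf, curry_injective.injOn, fun h hh =>
    ⟨uncurry h, isCurriedBddHomK_curry_iff.mp ((curry_uncurry h).symm ▸ hh), curry_uncurry h⟩⟩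

end ExponentialLaw

lemma absorbs_setOf_forall_apply_mem_iff {𝕜 M G : Type*} [NormedField 𝕜] [AddCommGroup M]
    [Module 𝕜 M] [AddCommGroup G] [Module 𝕜 G] (S : Set (M →ₗ[𝕜] G)) (V : Set G) (s : Set M) :
    Absorbs 𝕜 {x | ∀ g ∈ S, g x ∈ V} s ↔ Absorbs 𝕜 V (⋃ g ∈ S, g '' s) := by
  simp only [absorbs_iff_eventually_cobounded_mapsTo, MapsTo, mem_iUnion₂, mem_image,
    mem_ofPred_eq, map_smul]
  refine eventually_congr (Eventually.of_forall fun c => ?_)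
  constructor
  · rintro h _ ⟨g, hg, x, hx, rfl⟩
    exact h hx g hg
  · exact fun h x hx g hg => h ⟨g, hg, x, hx, rfl⟩

section UniformConvergenceOnFamily

variable {𝕜 : Type*} [RCLike 𝕜] {M G : Type*} [AddCommGroup M] [Module 𝕜 M]
  [AddCommGroup G] [Module 𝕜 G] [TopologicalSpace G] [IsTopologicalAddGroup G]

abbrev uniformConvergenceTopology (S : Set (M →ₗ[𝕜] G)) : TopologicalSpace M :=
  letI := IsTopologicalAddGroup.rightUniformSpace G
  .induced (UniformFun.ofFun ∘ LinearMap.pi fun g : S => g.1) inferInstance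

lemma uniformConvergenceTopology_hasBasis_nhds_zero (S : Set (M →ₗ[𝕜] G)) :
    (@nhds M (uniformConvergenceTopology S) 0).HasBasis (· ∈ 𝓝 (0 : G))
      fun V => {x | ∀ g ∈ S, g x ∈ V} := by
  let _ := IsTopologicalAddGroup.rightUniformSpace G
  have := isUniformAddGroup_of_addCommGroup (G := G)
  rw [uniformConvergenceTopology, nhds_induced]
  simp only [Function.comp_apply, map_zero, UniformFun.ofFun_zero]
  exact ((UniformFun.hasBasis_nhds_zero (α := S) (G := G)).comap _).congr (fun _ => Iff.rfl)
    fun V _ => Set.ext fun x => Subtype.forall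

lemma vnbdd_uniformConvergenceTopology_iff (S : Set (M →ₗ[𝕜] G)) (s : Set M) :
    VNBdd 𝕜 (uniformConvergenceTopology S) s ↔ VNBdd 𝕜 ‹_› (⋃ g ∈ S, g '' s) := by
  let _ := uniformConvergenceTopology S
  change IsVonNBounded 𝕜 s ↔ IsVonNBounded 𝕜 _
  simp only [(uniformConvergenceTopology_hasBasis_nhds_zero S).isVonNBounded_iff,
    isVonNBounded_iff, absorbs_setOf_forall_apply_mem_iff]

lemma isLCTop_uniformConvergenceTopology (hG : IsLCTop 𝕜 G ‹_›) {S : Set (M →ₗ[𝕜] G)}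
    (hS : ∀ x, VNBdd 𝕜 ‹_› ((fun g : M →ₗ[𝕜] G => g x) '' S)) :
    IsLCTop 𝕜 M (uniformConvergenceTopology S) := by
  let _ := IsTopologicalAddGroup.rightUniformSpace G
  have := isUniformAddGroup_of_addCommGroup (G := G)
  have := hG.1.2
  let _ := uniformConvergenceTopology S
  have hind : IsInducing (UniformFun.ofFun ∘ LinearMap.pi fun g : S => g.1) := ⟨rfl⟩
  have hbasis := uniformConvergenceTopology_hasBasis_nhds_zero S
  refine ⟨⟨?_, UniformFun.continuousSMul_induced_of_range_bounded 𝕜 S G M _ hind fun x => ?_⟩, ?_⟩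
  · let ofFun' : (S → G) →+ UniformFun S G := AddMonoidHom.id _
    exact hind.topologicalAddGroup (ofFun'.comp (LinearMap.pi fun g : S => g.1).toAddMonoidHom)
  · have hx : (fun g : M →ₗ[𝕜] G => g x) '' S = range ((LinearMap.pi fun g : S => g.1) x) :=
      image_eq_range _ _
    exact hx ▸ hS x
  · intro U hU
    obtain ⟨V, hV, hVU⟩ := hbasis.mem_iff.mp hU
    obtain ⟨W, hW, hWV, hWconv⟩ := hG.2 V hV
    refine ⟨_, hbasis.mem_of_mem hW, fun x hx => hVU fun g hg => hWV (hx g hg), ?_⟩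
    intro x hx y hy t ht₀ ht₁ g hg
    simpa only [map_add, map_smul] using hWconv (hx g hg) (hy g hg) t ht₀ ht₁

end UniformConvergenceOnFamily

lemma vnbdd_image_apply_of_forall_tmul {𝕜 E F G : Type*} [RCLike 𝕜] [AddCommGroup E]
    [Module 𝕜 E] [AddCommGroup F] [Module 𝕜 F] [AddCommGroup G] [Module 𝕜 G]
    [TopologicalSpace G] [ContinuousAdd G] [ContinuousSMul 𝕜 G]
    {S : Set (E ⊗[𝕜] F →ₗ[𝕜] G)}
    (hS : ∀ e f, VNBdd 𝕜 ‹_› ((fun g : E ⊗[𝕜] F →ₗ[𝕜] G => g (e ⊗ₜ f)) '' S))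
    (x : E ⊗[𝕜] F) : VNBdd 𝕜 ‹_› ((fun g : E ⊗[𝕜] F →ₗ[𝕜] G => g x) '' S) := by
  induction x using TensorProduct.induction_on with
  | zero =>
    refine IsVonNBounded.subset ?_ (isVonNBounded_singleton (0 : G))
    rintro _ ⟨g, -, rfl⟩
    exact map_zero g
  | tmul e f => exact hS e f
  | add x y hx hy =>
    refine IsVonNBounded.subset ?_ (IsVonNBounded.add hx hy)
    rintro _ ⟨g, hg, rfl⟩
    exact ⟨g x, ⟨g, hg, rfl⟩, g y, ⟨g, hg, rfl⟩, (map_add g x y).symm⟩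

section BornologicalTensorProduct

variable {𝕜 : Type*} [RCLike 𝕜]
variable {E F G : Type*} [AddCommGroup E] [Module 𝕜 E] [TopologicalSpace E]
  [AddCommGroup F] [Module 𝕜 F] [TopologicalSpace F] [AddCommGroup G] [Module 𝕜 G]
  [TopologicalSpace G] [ContinuousSMul 𝕜 E] [ContinuousSMul 𝕜 F]
  {τT : TopologicalSpace (E ⊗[𝕜] F)}

lemma famBdd_of_famBdd_comp_tmul (hG : IsLCTop 𝕜 G ‹_›)
    (hτT : IsBetaTensorTop 𝕜 ‹_› ‹_› τT) {S : Set (E ⊗[𝕜] F →ₗ[𝕜] G)}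
    (hS : FamBdd 𝕜 inferInstance ‹_›
      ((fun g : E ⊗[𝕜] F →ₗ[𝕜] G => fun p : E × F => g (p.1 ⊗ₜ p.2)) '' S)) :
    FamBdd 𝕜 τT ‹_› ((fun g : E ⊗[𝕜] F →ₗ[𝕜] G => ⇑g) '' S) := by
  have := hG.1.1
  have := hG.1.2
  simp only [FamBdd, biUnion_image] at hS ⊢
  have hpt := vnbdd_image_apply_of_forall_tmul fun e f => by
    refine IsVonNBounded.subset ?_ (hS {(e, f)} (isVonNBounded_singleton _))
    rintro _ ⟨g, hg, rfl⟩
    exact mem_biUnion hg (mem_image_of_mem _ (mem_singleton _))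
  have htmul : BddMap 𝕜 inferInstance (uniformConvergenceTopology S)
      (fun p : E × F => p.1 ⊗ₜ[𝕜] p.2) := fun s hs => by
    rw [vnbdd_uniformConvergenceTopology_iff]
    simpa only [image_image] using hS s hs
  have hle : τT ≤ uniformConvergenceTopology S :=
    hτT.2.2 _ (isLCTop_uniformConvergenceTopology hG hpt) htmul
  intro s hs
  exact (vnbdd_uniformConvergenceTopology_iff S s).mp (IsVonNBounded.of_topologicalSpace_le hle hs)

theorem famBdd_iff_famBdd_comp_tmul (hG : IsLCTop 𝕜 G ‹_›) (hτT : IsBetaTensorTop 𝕜 ‹_› ‹_› τT)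
    (S : Set (E ⊗[𝕜] F →ₗ[𝕜] G)) :
    FamBdd 𝕜 τT ‹_› ((fun g : E ⊗[𝕜] F →ₗ[𝕜] G => ⇑g) '' S) ↔
      FamBdd 𝕜 inferInstance ‹_›
        ((fun g : E ⊗[𝕜] F →ₗ[𝕜] G => fun p : E × F => g (p.1 ⊗ₜ p.2)) '' S) :=
  ⟨fun hS => by simpa only [image_image, Function.comp_def] using hS.comp_bddMap hτT.2.1,
    famBdd_of_famBdd_comp_tmul hG hτT⟩

theorem bddMap_iff_bddMap_comp_tmul (hG : IsLCTop 𝕜 G ‹_›)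
    (hτT : IsBetaTensorTop 𝕜 ‹_› ‹_› τT) (g : E ⊗[𝕜] F →ₗ[𝕜] G) :
    BddMap 𝕜 τT ‹_› g ↔ BddMap 𝕜 inferInstance ‹_› fun p : E × F => g (p.1 ⊗ₜ p.2) := by
  simpa only [image_singleton, famBdd_singleton_iff] using famBdd_iff_famBdd_comp_tmul hG hτT {g}

theorem bijOn_comp_tmul (hG : IsLCTop 𝕜 G ‹_›) (hτT : IsBetaTensorTop 𝕜 ‹_› ‹_› τT) :
    BijOn (fun (g : E ⊗[𝕜] F →ₗ[𝕜] G) => fun p : E × F => g (p.1 ⊗ₜ p.2))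
      {g | BddMap 𝕜 τT ‹_› g} {f | BddMap 𝕜 inferInstance ‹_› f ∧ IsBilinMap 𝕜 f} := by
  refine ⟨fun g hg => ⟨(bddMap_iff_bddMap_comp_tmul hG hτT g).mp hg, isBilinMap_comp_tmul g⟩,
    fun g _ g' _ h => ext' fun x y => congrFun h (x, y), ?_⟩
  rintro f ⟨hfb, hf⟩
  have hcomp : (fun p : E × F => lift hf.toLinearMap₂ (p.1 ⊗ₜ p.2)) = f :=
    funext fun p => hf.lift_toLinearMap₂_tmul p.1 p.2
  exact ⟨_, (bddMap_iff_bddMap_comp_tmul hG hτT _).mpr (by rwa [hcomp]), hcomp⟩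

end BornologicalTensorProduct

theorem statement18_general {𝕜 : Type*} [RCLike 𝕜]
    (E : Type*) [AddCommGroup E] [Module 𝕜 E] [TopologicalSpace E]
    (hE : IsLCTop 𝕜 E (inferInstance))
    (F : Type*) [AddCommGroup F] [Module 𝕜 F] [TopologicalSpace F]
    (hF : IsLCTop 𝕜 F (inferInstance))
    (G : Type*) [AddCommGroup G] [Module 𝕜 G] [TopologicalSpace G]
    (hG : IsLCTop 𝕜 G (inferInstance))
    -- the bornological tensor product topology on E ⊗[𝕜] F
    (τT : TopologicalSpace (TensorProduct 𝕜 E F))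
    (hτT : IsBetaTensorTop 𝕜 (inferInstance) (inferInstance) τT) :
    -- a bilinear map is bounded iff the associated linear map on E ⊗_β F is bounded
    ((∀ φ : E →ₗ[𝕜] F →ₗ[𝕜] G,
        (BddMap 𝕜 (inferInstance : TopologicalSpace (E × F)) (inferInstance)
          (fun p : E × F => φ p.1 p.2) ↔
         BddMap 𝕜 τT (inferInstance) ⇑(TensorProduct.lift φ)))) ∧
    -- L^b(E ⊗_β F, G) ≅ L^b(E, F; G) bornologically, via the transpose of ⊗
    ((Set.BijOn (fun (g : TensorProduct 𝕜 E F →ₗ[𝕜] G) =>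
          (fun p : E × F => g (p.1 ⊗ₜ[𝕜] p.2)))
        {g | BddMap 𝕜 τT (inferInstance) ⇑g}
        {f | BddMap 𝕜 (inferInstance : TopologicalSpace (E × F)) (inferInstance) f ∧
             IsBilinMap 𝕜 f} ∧
      ∀ S : Set (TensorProduct 𝕜 E F →ₗ[𝕜] G),
        S ⊆ {g | BddMap 𝕜 τT (inferInstance) ⇑g} →
        (FamBdd 𝕜 τT (inferInstance)
            ((fun g : TensorProduct 𝕜 E F →ₗ[𝕜] G => (g : TensorProduct 𝕜 E F → G)) '' S) ↔
         FamBdd 𝕜 (inferInstance : TopologicalSpace (E × F)) (inferInstance)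
            ((fun (g : TensorProduct 𝕜 E F →ₗ[𝕜] G) =>
              (fun p : E × F => g (p.1 ⊗ₜ[𝕜] p.2))) '' S)))) ∧
    -- L^b(E, F; G) ≅ L^b(E, L^b(F, G)) bornologically, via the exponential law
    ((Set.BijOn (fun (f : E × F → G) => Function.curry f)
        {f | BddMap 𝕜 (inferInstance : TopologicalSpace (E × F)) (inferInstance) f ∧
             IsBilinMap 𝕜 f}
        {h | IsCurriedBddHomK 𝕜 (inferInstance) (inferInstance) (inferInstance) h} ∧
      ∀ S : Set (E × F → G),
        S ⊆ {f | BddMap 𝕜 (inferInstance : TopologicalSpace (E × F)) (inferInstance) f ∧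
             IsBilinMap 𝕜 f} →
        (FamBdd 𝕜 (inferInstance : TopologicalSpace (E × F)) (inferInstance) S ↔
         CurFamBdd 𝕜 (inferInstance) (inferInstance) (inferInstance)
           (Function.curry '' S)))) := by
  have := hE.1.2
  have := hF.1.2
  refine ⟨fun φ => ?_, ⟨bijOn_comp_tmul hG hτT, fun S _ => famBdd_iff_famBdd_comp_tmul hG hτT S⟩,
    bijOn_curry, fun S _ => famBdd_iff_curFamBdd S⟩
  simpa only [lift.tmul] using (bddMap_iff_bddMap_comp_tmul hG hτT (lift φ)).symm

theorem statement18 {𝕜 : Type*} [RCLike 𝕜]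
    (E : Type*) [AddCommGroup E] [Module 𝕜 E] [TopologicalSpace E] [T2Space E]
    (hE : IsLCTop 𝕜 E (inferInstance))
    (F : Type*) [AddCommGroup F] [Module 𝕜 F] [TopologicalSpace F] [T2Space F]
    (hF : IsLCTop 𝕜 F (inferInstance))
    (G : Type*) [AddCommGroup G] [Module 𝕜 G] [TopologicalSpace G] [T2Space G]
    (hG : IsLCTop 𝕜 G (inferInstance))
    -- the bornological tensor product topology on E ⊗[𝕜] F
    (τT : TopologicalSpace (TensorProduct 𝕜 E F))
    (hτT : IsBetaTensorTop 𝕜 (inferInstance) (inferInstance) τT) :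
    -- a bilinear map is bounded iff the associated linear map on E ⊗_β F is bounded
    ((∀ φ : E →ₗ[𝕜] F →ₗ[𝕜] G,
        (BddMap 𝕜 (inferInstance : TopologicalSpace (E × F)) (inferInstance)
          (fun p : E × F => φ p.1 p.2) ↔
         BddMap 𝕜 τT (inferInstance) ⇑(TensorProduct.lift φ)))) ∧
    -- L^b(E ⊗_β F, G) ≅ L^b(E, F; G) bornologically, via the transpose of ⊗
    ((Set.BijOn (fun (g : TensorProduct 𝕜 E F →ₗ[𝕜] G) =>
          (fun p : E × F => g (p.1 ⊗ₜ[𝕜] p.2)))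
        {g | BddMap 𝕜 τT (inferInstance) ⇑g}
        {f | BddMap 𝕜 (inferInstance : TopologicalSpace (E × F)) (inferInstance) f ∧
             IsBilinMap 𝕜 f} ∧
      ∀ S : Set (TensorProduct 𝕜 E F →ₗ[𝕜] G),
        S ⊆ {g | BddMap 𝕜 τT (inferInstance) ⇑g} →
        (FamBdd 𝕜 τT (inferInstance)
            ((fun g : TensorProduct 𝕜 E F →ₗ[𝕜] G => (g : TensorProduct 𝕜 E F → G)) '' S) ↔
         FamBdd 𝕜 (inferInstance : TopologicalSpace (E × F)) (inferInstance)
            ((fun (g : TensorProduct 𝕜 E F →ₗ[𝕜] G) =>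
              (fun p : E × F => g (p.1 ⊗ₜ[𝕜] p.2))) '' S)))) ∧
    -- L^b(E, F; G) ≅ L^b(E, L^b(F, G)) bornologically, via the exponential law
    ((Set.BijOn (fun (f : E × F → G) => Function.curry f)
        {f | BddMap 𝕜 (inferInstance : TopologicalSpace (E × F)) (inferInstance) f ∧
             IsBilinMap 𝕜 f}
        {h | IsCurriedBddHomK 𝕜 (inferInstance) (inferInstance) (inferInstance) h} ∧
      ∀ S : Set (E × F → G),
        S ⊆ {f | BddMap 𝕜 (inferInstance : TopologicalSpace (E × F)) (inferInstance) f ∧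
             IsBilinMap 𝕜 f} →
        (FamBdd 𝕜 (inferInstance : TopologicalSpace (E × F)) (inferInstance) S ↔
         CurFamBdd 𝕜 (inferInstance) (inferInstance) (inferInstance)
           (Function.curry '' S)))) :=
  statement18_general E hE F hF G hG τT hτT
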